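/- arXiv:2603.15718 — 3 statements merged into one kernel-verified Lean document; each statement's English description precedes it below -/
import Mathlib

section
/- For every s ≥ 0 and n ≥ 0, the coefficient polynomials U_n^{(s)} defined by (1 − 2tx + t²)^{−(s+1)} = Σ_n U_n^{(s)}(x) tⁿ satisfy U_{2n+1}^{(s)}(x) = Σ_k (−1)^{n−k} C(n+k+s+1, 2k+s+1) C(2k+s+1, s) 2^{2k+1} x^{2k+1}, summed over 0 ≤ k ≤ n. -/
/-!
With `u = t (2x - t)` we have `1 - 2xt + t² = 1 - u`, so `(1 - 2xt + t²)^{-(s+1)}` is the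
substitution of `u` into `(1 - u)^{-(s+1)} = ∑ₖ C(s+k, s) uᵏ`. Since `uᵏ = tᵏ (2x - t)ᵏ`, the
coefficient of `tᵐ` is `∑_{k+j=m} C(s+k, s) (-1)ʲ C(k, j) (2x)^{k-j}`. For `m = 2n+1` only
`k = n+1+i` with `i ≤ n` survive, and `C(s+k, s) C(k, 2i+1) = C(k+s, 2i+s+1) C(2i+s+1, s)`.
-/

open Polynomial PowerSeries Finset

namespace PowerSeries

variable {R : Type*} [CommRing R]

theorem coeff_subst_X_mul (b f : R⟦X⟧) (m : ℕ) :
    coeff m (f.subst (X * b)) = ∑ p ∈ antidiagonal m, coeff p.1 f * coeff p.2 (b ^ p.1) := by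
  have hsub : HasSubst (X * b : R⟦X⟧) := HasSubst.X'.mul_left
  have hterm (d : ℕ) : coeff d f • coeff m ((X * b) ^ d) =
      if d ≤ m then coeff d f * coeff (m - d) (b ^ d) else 0 := by
    rw [mul_pow, coeff_X_pow_mul', smul_eq_mul]
    split_ifs <;> simp
  rw [coeff_subst' hsub, finsum_congr hterm, finsum_eq_sum_of_support_subset (s := range (m + 1)),
    Nat.sum_antidiagonal_eq_sum_range_succ (fun i j => coeff i f * coeff j (b ^ i))]
  · exact sum_congr rfl fun d hd => if_pos (Nat.lt_succ_iff.mp (mem_range.mp hd))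
  · intro d hd
    simp only [Function.mem_support, ne_eq, ite_eq_right_iff, Classical.not_imp] at hd
    simpa [Nat.lt_succ_iff] using hd.1

theorem coeff_C_sub_X_pow (c : R) (k j : ℕ) :
    coeff j ((C c - X) ^ k) = (-1) ^ j * c ^ (k - j) * k.choose j := by
  have hrescale : (C c - X : R⟦X⟧) ^ k =
      rescale (-1) (((Polynomial.X + Polynomial.C c) ^ k : R[X]) : R⟦X⟧) := by
    have hC : rescale (-1) (C c) = C c := by
      ext n
      rcases n with _ | n <;> simp [coeff_rescale, coeff_C]
    rw [Polynomial.coe_pow, map_pow, Polynomial.coe_add, Polynomial.coe_X, Polynomial.coe_C,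
      map_add, rescale_neg_one_X, hC, neg_add_eq_sub]
  rw [hrescale, coeff_rescale, Polynomial.coeff_coe, Polynomial.coeff_X_add_C_pow, mul_assoc]

/-- The power series `(1 - 2xt + t²)^{-(s+1)}`. -/
noncomputable def gegenbauerSeries (x : R) (s : ℕ) : R⟦X⟧ :=
  (mk fun n => ((s + n).choose s : R)).subst (X * (C (2 * x) - X))

theorem pow_mul_gegenbauerSeries_eq_one (x : R) (s : ℕ) :
    (1 - 2 * C x * X + X ^ 2) ^ (s + 1) * gegenbauerSeries x s = 1 := by
  have hsub : HasSubst (X * (C (2 * x) - X) : R⟦X⟧) := HasSubst.X'.mul_left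
  have hbase :
      (1 - 2 * C x * X + X ^ 2 : R⟦X⟧) = (1 - X : R⟦X⟧).subst (X * (C (2 * x) - X)) := by
    rw [← coe_substAlgHom hsub, map_sub, map_one, coe_substAlgHom, subst_X hsub, map_mul,
      map_ofNat]
    ring
  rw [hbase, gegenbauerSeries, ← subst_pow hsub, ← subst_mul hsub,
    mul_comm ((1 - X : R⟦X⟧) ^ (s + 1)), mk_add_choose_mul_one_sub_pow_eq_one,
    ← coe_substAlgHom hsub, map_one]

theorem coeff_gegenbauerSeries (x : R) (s m : ℕ) :
    coeff m (gegenbauerSeries x s) = ∑ p ∈ antidiagonal m,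
      ((s + p.1).choose s : R) * ((-1) ^ p.2 * (2 * x) ^ (p.1 - p.2) * p.1.choose p.2) := by
  simp only [gegenbauerSeries, coeff_subst_X_mul, coeff_mk, coeff_C_sub_X_pow]

theorem coeff_two_mul_add_one_gegenbauerSeries (x : R) (s n : ℕ) :
    coeff (2 * n + 1) (gegenbauerSeries x s) = ∑ k ∈ range (n + 1),
      (-1) ^ (n - k) * ((n + k + s + 1).choose (2 * k + s + 1) : R) *
        ((2 * k + s + 1).choose s : R) * 2 ^ (2 * k + 1) * x ^ (2 * k + 1) := by
  rw [coeff_gegenbauerSeries, Nat.sum_antidiagonal_eq_sum_range_succ_mk,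
    show (2 * n + 1).succ = (n + 1) + (n + 1) by omega, sum_range_add]
  have hlow : ∀ k ∈ range (n + 1), k.choose (2 * n + 1 - k) = 0 := fun k hk =>
    Nat.choose_eq_zero_of_lt (by have := mem_range.mp hk; omega)
  rw [sum_eq_zero fun k hk => by simp [hlow k hk], zero_add]
  refine sum_congr rfl fun k hk => ?_
  have hkn : k ≤ n := Nat.lt_succ_iff.mp (mem_range.mp hk)
  have hj : 2 * n + 1 - (n + 1 + k) = n - k := by omega
  have he : n + 1 + k - (n - k) = 2 * k + 1 := by omega
  have hchoose : (n + k + s + 1).choose (2 * k + s + 1) * (2 * k + s + 1).choose s =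
      (s + (n + 1 + k)).choose s * (n + 1 + k).choose (n - k) := by
    rw [show n + k + s + 1 = s + (n + 1 + k) by omega, Nat.choose_mul (by omega),
      Nat.add_sub_cancel_left, show 2 * k + s + 1 - s = 2 * k + 1 by omega,
      ← Nat.choose_symm (by omega : n - k ≤ n + 1 + k), he]
  simp only [hj, he]
  rw [mul_assoc _ (((n + k + s + 1).choose (2 * k + s + 1) : ℕ) : R), ← Nat.cast_mul, hchoose]
  push_cast
  ring

end PowerSeries

theorem generalized_chebyshev_odd_explicit
    (U : ℕ → ℕ → ℚ[X])
    (hU : ∀ s : ℕ,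
      ((1 : PowerSeries ℚ[X]) - 2 * PowerSeries.C (Polynomial.X : ℚ[X]) * PowerSeries.X +
          PowerSeries.X ^ 2) ^ (s + 1) * PowerSeries.mk (fun n => U s n) = 1)
    (s n : ℕ) :
    U s (2 * n + 1) =
      ∑ k ∈ range (n + 1),
        (-1 : ℚ[X]) ^ (n - k) * ((n + k + s + 1).choose (2 * k + s + 1) : ℚ[X]) *
          ((2 * k + s + 1).choose s : ℚ[X]) * 2 ^ (2 * k + 1) * Polynomial.X ^ (2 * k + 1) := by
  have hseries : PowerSeries.mk (U s) = gegenbauerSeries Polynomial.X s :=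
    left_inv_eq_right_inv (by rw [mul_comm]; exact hU s) (pow_mul_gegenbauerSeries_eq_one _ s)
  rw [← coeff_two_mul_add_one_gegenbauerSeries, ← hseries, coeff_mk]
end

section
/- For any positive integer d and any integer h with 0 ≤ h ≤ d, the identity (1 − L_d z + (−1)^d z²) · Σ_{n≥0} F_{nd+h} zⁿ = F_h + (−1)^h F_{d−h} z holds in the ring of formal power series ℤ[[z]]. -/
open PowerSeries

def lucas : ℕ → ℕ
  | 0 => 2
  | 1 => 1
  | n + 2 => lucas n + lucas (n + 1)

/-! By Binet's formulas `F_n = (φⁿ - ψⁿ)/√5` and `L_n = φⁿ + ψⁿ` with `φψ = -1`, the numbers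
`φ^d` and `ψ^d` are the roots of `x² - L_d x + (-1)^d`, so `a_n = F_{nd+h}` satisfies
`a_{n+2} = L_d a_{n+1} - (-1)^d a_n`. Multiplying the generating function of any such sequence by
`1 - L_d z + (-1)^d z²` leaves only `a_0 + (a_1 - L_d a_0) z`, and here
`a_1 - L_d a_0 = F_{d+h} - L_d F_h = (-1)^h F_{d-h}`. -/

theorem PowerSeries.mul_mk_of_linearRecurrence {R : Type*} [CommRing R] (p q : R) (a : ℕ → R)
    (ha : ∀ n, a (n + 2) = p * a (n + 1) - q * a n) :
    (1 - C p * X + C q * X ^ 2) * mk a = C (a 0) + C (a 1 - p * a 0) * X := by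
  ext (_ | _ | n)
  · simp
  · simp [sub_mul, add_mul, mul_assoc, coeff_X_pow_mul']
  · simp [sub_mul, add_mul, mul_assoc, coeff_X_pow_mul', ha]

open Real goldenRatio

theorem lucas_eq_goldenRatio_pow_add_goldenConj_pow (n : ℕ) : (lucas n : ℝ) = φ ^ n + ψ ^ n := by
  induction n using Nat.twoStepInduction with
  | zero => norm_num [lucas]
  | one => simp [lucas, goldenRatio_add_goldenConj]
  | more n ih₀ ih₁ =>
    rw [lucas, Nat.cast_add, ih₀, ih₁]
    linear_combination -φ ^ n * goldenRatio_sq - ψ ^ n * goldenConj_sq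

theorem fib_add_two_mul (m d : ℕ) :
    (Nat.fib (m + 2 * d) : ℤ) = lucas d * Nat.fib (m + d) - (-1) ^ d * Nat.fib m := by
  suffices (Nat.fib (m + 2 * d) : ℝ) = lucas d * Nat.fib (m + d) - (-1) ^ d * Nat.fib m by
    exact_mod_cast this
  rw [coe_fib_eq, coe_fib_eq, coe_fib_eq, lucas_eq_goldenRatio_pow_add_goldenConj_pow,
    ← goldenRatio_mul_goldenConj]
  -- otherwise `ring` unfolds `φ` and `ψ` into expressions in `√5`
  generalize φ = a, ψ = b
  ring

theorem fib_add_sub_lucas_mul_fib {h d : ℕ} (hh : h ≤ d) :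
    (Nat.fib (d + h) : ℤ) - lucas d * Nat.fib h = (-1) ^ h * Nat.fib (d - h) := by
  obtain ⟨k, rfl⟩ := Nat.exists_eq_add_of_le hh
  rw [Nat.add_sub_cancel_left]
  suffices (Nat.fib (h + k + h) : ℝ) - lucas (h + k) * Nat.fib h = (-1) ^ h * Nat.fib k by
    exact_mod_cast this
  rw [coe_fib_eq, coe_fib_eq, coe_fib_eq, lucas_eq_goldenRatio_pow_add_goldenConj_pow,
    ← goldenRatio_mul_goldenConj]
  generalize φ = a, ψ = b
  ring

theorem fib_d_section_generating_function_general (d h : ℕ) (hh : h ≤ d) :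
    ((1 : PowerSeries ℤ) - (lucas d : PowerSeries ℤ) * PowerSeries.X +
        (-1 : PowerSeries ℤ) ^ d * PowerSeries.X ^ 2) *
      PowerSeries.mk (fun n => (Nat.fib (n * d + h) : ℤ)) =
    (Nat.fib h : PowerSeries ℤ) + (-1 : PowerSeries ℤ) ^ h * (Nat.fib (d - h) : PowerSeries ℤ) *
      PowerSeries.X := by
  have key := mul_mk_of_linearRecurrence (lucas d : ℤ) ((-1) ^ d)
    (fun n => (Nat.fib (n * d + h) : ℤ)) fun n => by
      rw [show (n + 2) * d + h = n * d + h + 2 * d by ring,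
        show (n + 1) * d + h = n * d + h + d by ring, fib_add_two_mul]
  simpa only [zero_mul, zero_add, one_mul, fib_add_sub_lucas_mul_fib hh, map_natCast, map_mul,
    map_pow, map_neg, map_one] using key

theorem fib_d_section_generating_function (d h : ℕ) (hd : 1 ≤ d) (hh : h ≤ d) :
    ((1 : PowerSeries ℤ) - (lucas d : PowerSeries ℤ) * PowerSeries.X +
        (-1 : PowerSeries ℤ) ^ d * PowerSeries.X ^ 2) *
      PowerSeries.mk (fun n => (Nat.fib (n * d + h) : ℤ)) =
    (Nat.fib h : PowerSeries ℤ) + (-1 : PowerSeries ℤ) ^ h * (Nat.fib (d - h) : PowerSeries ℤ) *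
      PowerSeries.X :=
  fib_d_section_generating_function_general d h hh
end

section
/- Fix integers d ≥ 1, 0 ≤ h ≤ d, s ≥ 0, and let Ū_n^{(s)}(x) be defined by (1 − 2tx − εt²)^{−(s+1)} = Σ_n Ū_n^{(s)}(x) tⁿ with ε = (−1)^{d−1}, so that 1/(1 − L_d z − ε z²)^{s+1} = Σ_n Ū_n^{(s)}(L_d/2) zⁿ. Then for every n ≥ 0, the coefficient of zⁿ in ((F_h + (−1)^h F_{d−h} z)/(1 − L_d z + (−1)^d z²))^{s+1} equals Σ_{j=0}^{min(n, s+1)} C(s+1, j) F_h^{s+1−j} (−1)^{jh} F_{d−h}^{j} Ū_{n−j}^{(s)}(L_d/2). -/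
open PowerSeries Finset

lemma mk_conv_eq (a b : ℚ) (U : ℕ → ℚ) (s : ℕ) :
    PowerSeries.mk (fun n =>
        ∑ j ∈ range (s + 2),
          if j ≤ n then ((s + 1).choose j : ℚ) * a ^ (s + 1 - j) * b ^ j * U (n - j) else 0) =
      (PowerSeries.C (R := ℚ) a + PowerSeries.C (R := ℚ) b * PowerSeries.X) ^ (s + 1) * PowerSeries.mk U := by
  ext n
  rw [add_comm (PowerSeries.C (R := ℚ) a), add_pow, Finset.sum_mul, map_sum, coeff_mk]
  refine Finset.sum_congr rfl fun j _ => ?_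
  have : (PowerSeries.C (R := ℚ) b * PowerSeries.X) ^ j * PowerSeries.C (R := ℚ) a ^ (s + 1 - j) *
      ((s + 1).choose j : PowerSeries ℚ) * PowerSeries.mk U =
      PowerSeries.C (R := ℚ) (((s + 1).choose j : ℚ) * a ^ (s + 1 - j) * b ^ j) *
      (PowerSeries.X ^ j * PowerSeries.mk U) := by
    simp only [map_mul, map_pow, ← map_natCast (PowerSeries.C (R := ℚ))]
    ring
  rw [this, PowerSeries.coeff_C_mul, PowerSeries.coeff_X_pow_mul']
  simp only [coeff_mk]
  split_ifs with hjn
  · ring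
  · simp

theorem fib_d_section_convolution (d h s : ℕ) (hd : 1 ≤ d) (hh : h ≤ d)
    (Ubar : ℕ → ℚ)
    (hU : ((1 : PowerSeries ℚ) - (lucas d : PowerSeries ℚ) * PowerSeries.X +
          (-1 : PowerSeries ℚ) ^ d * PowerSeries.X ^ 2) ^ (s + 1) *
        PowerSeries.mk Ubar = 1) :
    ((1 : PowerSeries ℚ) - (lucas d : PowerSeries ℚ) * PowerSeries.X +
        (-1 : PowerSeries ℚ) ^ d * PowerSeries.X ^ 2) ^ (s + 1) *
      PowerSeries.mk (fun n =>
        ∑ j ∈ range (s + 2),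
          if j ≤ n then
            ((s + 1).choose j : ℚ) * (Nat.fib h : ℚ) ^ (s + 1 - j) * (-1 : ℚ) ^ (j * h) *
              (Nat.fib (d - h) : ℚ) ^ j * Ubar (n - j)
          else 0) =
    ((Nat.fib h : PowerSeries ℚ) +
        (-1 : PowerSeries ℚ) ^ h * (Nat.fib (d - h) : PowerSeries ℚ) * PowerSeries.X) ^ (s + 1) := by
  have hcoef : (PowerSeries.mk (fun n =>
        ∑ j ∈ range (s + 2),
          if j ≤ n then
            ((s + 1).choose j : ℚ) * (Nat.fib h : ℚ) ^ (s + 1 - j) * (-1 : ℚ) ^ (j * h) *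
              (Nat.fib (d - h) : ℚ) ^ j * Ubar (n - j)
          else 0) : PowerSeries ℚ) =
      PowerSeries.mk (fun n =>
        ∑ j ∈ range (s + 2),
          if j ≤ n then
            ((s + 1).choose j : ℚ) * (Nat.fib h : ℚ) ^ (s + 1 - j) *
              ((-1 : ℚ) ^ h * (Nat.fib (d - h) : ℚ)) ^ j * Ubar (n - j)
          else 0) := by
    ext n
    simp only [coeff_mk]
    refine Finset.sum_congr rfl fun j _ => ?_
    split_ifs with hjn
    · rw [mul_pow, ← pow_mul, mul_comm h j]
      ring
    · rfl
  rw [hcoef, mk_conv_eq (Nat.fib h : ℚ) ((-1 : ℚ) ^ h * (Nat.fib (d - h) : ℚ)) Ubar s,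
    ← mul_assoc, mul_comm _ ((PowerSeries.C (R := ℚ) (Nat.fib h : ℚ) +
      PowerSeries.C (R := ℚ) ((-1 : ℚ) ^ h * (Nat.fib (d - h) : ℚ)) * PowerSeries.X) ^ (s + 1)),
    mul_assoc, hU, mul_one]
  congr 1
  simp only [map_mul, map_pow, map_neg, map_one, map_natCast]
end
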